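/- arXiv:math/0407247 — 6 statements merged into one kernel-verified Lean document; each statement's English description precedes it below -/
import Mathlib

section
/- Let E/K be a finite separable field extension of degree n with embeddings σ₁,…,σₙ into a normal closure M, let A = E[X]/I be a finitely presented E-algebra, and let Ā = A^{σ₁} ⊗_M ⋯ ⊗_M A^{σₙ} with its natural Gal(M/K)-action. Then the natural map Ā^G ⊗_K M → Ā is an isomorphism of M-algebras. -/
open scoped TensorProduct

/-- Galois descent, Lemma 2.1: Let `M/K` be the (finite Galois) compositum of
the conjugates of a finite separable extension `E/K`, and let `B` be a commutative
`M`-algebra (such as `Ā = A^{σ₁} ⊗_M ⋯ ⊗_M A^{σₙ}`) equipped with a semilinear action of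
`G = Gal(M/K)`. Then the natural map `B^G ⊗_K M → B` is an isomorphism of `M`-algebras. -/
theorem stmt_0 (K M : Type*) [Field K] [Field M] [Algebra K M]
    [FiniteDimensional K M] [IsGalois K M]
    (B : Type*) [CommRing B] [Algebra M B] [Algebra K B] [IsScalarTower K M B]
    [MulSemiringAction (M ≃ₐ[K] M) B]
    (hsemi : ∀ (g : M ≃ₐ[K] M) (m : M) (b : B), g • ((m • b : B)) = (g m) • (g • b))
    (Binv : Subalgebra K B)
    (hBinv : ∀ b : B, b ∈ Binv ↔ ∀ g : M ≃ₐ[K] M, g • b = b) :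
    Function.Bijective
      (Algebra.TensorProduct.productMap (IsScalarTower.toAlgHom K M B) Binv.val) := by
  classical
  set G := M ≃ₐ[K] M with hG
  set ι := Fin (Module.finrank K M) with hι
  set x : Module.Basis ι K M := Module.finBasis K M with hx
  have hT : (Algebra.traceForm K M).Nondegenerate := traceForm_nondegenerate K M
  set y : Module.Basis ι K M := (Algebra.traceForm K M).dualBasis hT x with hy
  -- Lemma A: expansion of m in the basis y with trace coefficients
  have hA : ∀ m : M, ∑ j, (Algebra.trace K M (m * x j)) • y j = m := by
    intro m
    conv_rhs => rw [← y.sum_repr m]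
    refine Finset.sum_congr rfl fun j _ => ?_
    rw [hy, LinearMap.BilinForm.dualBasis_repr_apply]
    rfl
  -- Lemma B: delta identity
  have hB : ∀ g : G, ∑ j, (g (x j)) * y j = if g = 1 then 1 else 0 := by
    intro g
    set c : G → M := fun h => ∑ j, (h (x j)) * y j with hc
    have key : ∀ m : M, ∑ h : G, c h * h m = m := by
      intro m
      have e1 : ∀ j : ι, (Algebra.trace K M (m * x j)) • y j
          = ∑ h : G, h m * (h (x j) * y j) := by
        intro j
        rw [Algebra.smul_def, trace_eq_sum_automorphisms (K := K) (m * x j), Finset.sum_mul]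
        exact Finset.sum_congr rfl fun h _ => by rw [map_mul]; ring
      calc ∑ h : G, c h * h m = ∑ h : G, ∑ j : ι, h m * (h (x j) * y j) := by
            refine Finset.sum_congr rfl fun h _ => ?_
            rw [hc]
            rw [Finset.sum_mul]
            exact Finset.sum_congr rfl fun j _ => by ring
        _ = ∑ j : ι, ∑ h : G, h m * (h (x j) * y j) := Finset.sum_comm
        _ = ∑ j : ι, (Algebra.trace K M (m * x j)) • y j :=
            Finset.sum_congr rfl fun j _ => (e1 j).symm
        _ = m := hA m
    have li : LinearIndependent M (fun h : G => ((h : M →* M) : M → M)) := by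
      refine (linearIndependent_monoidHom M M).comp (fun h : G => (h : M →* M)) ?_
      intro h1 h2 e
      exact AlgEquiv.ext fun m => DFunLike.congr_fun e m
    have h0 : ∑ h : G, (c h - if h = 1 then 1 else 0) • ((h : M →* M) : M → M) = 0 := by
      funext m
      simp only [Finset.sum_apply, Pi.smul_apply, smul_eq_mul, Pi.zero_apply, sub_mul,
        Finset.sum_sub_distrib, MonoidHom.coe_coe]
      have h2 : ∑ h : G, (if h = 1 then (1:M) else 0) * h m = m := by
        rw [Finset.sum_eq_single (1 : G)]
        · rw [if_pos rfl, one_mul]; exact AlgEquiv.one_apply m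
        · intro h _ hne; simp [hne]
        · simp
      rw [key m, h2, sub_self]
    have := Fintype.linearIndependent_iff.mp li
      (fun h => c h - if h = 1 then 1 else 0) h0 g
    have := sub_eq_zero.mp this
    simpa [hc] using this
  -- invariance of the averaged elements
  have mem : ∀ (v : B) (j : ι), (∑ g : G, g • ((x j) • v)) ∈ Binv := by
    intro v j
    rw [hBinv]
    intro h
    rw [Finset.smul_sum]
    exact Fintype.sum_equiv (Equiv.mulLeft h) _ _ fun g => (smul_smul h g _)
  set φ := Algebra.TensorProduct.productMap (IsScalarTower.toAlgHom K M B) Binv.val with hφ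
  set inv : B → M ⊗[K] Binv :=
    fun v => ∑ j, (y j) ⊗ₜ[K] (⟨∑ g : G, g • ((x j) • v), mem v j⟩ : Binv) with hinv
  have φ_tmul : ∀ (m : M) (c : Binv), φ (m ⊗ₜ[K] c) = m • (c : B) := by
    intro m c
    rw [hφ, Algebra.TensorProduct.productMap_apply_tmul]
    simp [Algebra.smul_def]
  have right : ∀ v : B, φ (inv v) = v := by
    intro v
    rw [hinv]
    simp only [map_sum, φ_tmul]
    calc ∑ j, (y j) • ((⟨∑ g : G, g • ((x j) • v), mem v j⟩ : Binv) : B)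
        = ∑ j, ∑ g : G, (y j) • ((g (x j)) • (g • v)) := by
          refine Finset.sum_congr rfl fun j _ => ?_
          rw [Subtype.coe_mk, Finset.smul_sum]
          exact Finset.sum_congr rfl fun g _ => by rw [hsemi]
      _ = ∑ g : G, (∑ j, (g (x j)) * (y j)) • (g • v) := by
          rw [Finset.sum_comm]
          refine Finset.sum_congr rfl fun g _ => ?_
          rw [Finset.sum_smul]
          exact Finset.sum_congr rfl fun j _ => by rw [smul_smul, mul_comm]
      _ = v := by
          simp only [hB]
          rw [Finset.sum_eq_single (1 : G)]
          · rw [if_pos rfl, one_smul, one_smul]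
          · intro h _ hne; simp [hne]
          · simp
  have left : ∀ t : M ⊗[K] Binv, inv (φ t) = t := by
    have inv_zero : inv 0 = 0 := by
      rw [hinv]
      refine Finset.sum_eq_zero fun j _ => ?_
      have : (⟨∑ g : G, g • ((x j) • (0:B)), mem 0 j⟩ : Binv) = 0 := by
        apply Subtype.ext
        simp
      rw [this, TensorProduct.tmul_zero]
    have inv_add : ∀ v w : B, inv (v + w) = inv v + inv w := by
      intro v w
      rw [hinv, ← Finset.sum_add_distrib]
      refine Finset.sum_congr rfl fun j _ => ?_
      rw [← TensorProduct.tmul_add]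
      congr 1
      apply Subtype.ext
      push_cast
      rw [← Finset.sum_add_distrib]
      exact Finset.sum_congr rfl fun g _ => by rw [smul_add, smul_add]
    intro t
    induction t using TensorProduct.induction_on with
    | zero => rw [map_zero, inv_zero]
    | add a b ha hb => rw [map_add, inv_add, ha, hb]
    | tmul m c =>
        rw [φ_tmul, hinv]
        calc ∑ j, (y j) ⊗ₜ[K] (⟨∑ g : G, g • ((x j) • (m • (c:B))), mem _ j⟩ : Binv)
            = ∑ j, ((Algebra.trace K M (m * x j)) • (y j)) ⊗ₜ[K] c := by
              refine Finset.sum_congr rfl fun j _ => ?_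
              have hsub : (⟨∑ g : G, g • ((x j) • (m • (c:B))), mem _ j⟩ : Binv)
                  = (Algebra.trace K M (m * x j)) • c := by
                apply Subtype.ext
                have e : ∀ g : G, g • ((x j) • (m • (c:B))) = (g (m * x j)) • (c : B) := by
                  intro g
                  rw [smul_smul, hsemi, (hBinv (c:B)).mp c.2 g, mul_comm]
                rw [Subtype.coe_mk, Finset.sum_congr rfl fun g _ => e g, ← Finset.sum_smul,
                  ← trace_eq_sum_automorphisms (K := K) (m * x j), algebraMap_smul]
                rfl
              rw [hsub, TensorProduct.tmul_smul, TensorProduct.smul_tmul']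
          _ = m ⊗ₜ[K] c := by
              rw [← TensorProduct.sum_tmul, hA m]
  exact Function.bijective_iff_has_inverse.mpr ⟨inv, left, right⟩
end

section
/- Let R be a commutative ring, and let T₁, T₂ be finitely generated free modules over S = O_E ⊗ R where O_E is finite étale over R with a trace form inducing a perfect R-bilinear pairing on S. For every R-bilinear map ψ : T₁ × T₂ → R satisfying ψ(e·v₁, v₂) = ψ(v₁, e·v₂) for all e ∈ S, there exists a unique S-bilinear map φ : T₁ × T₂ → S such that Tr_{S/R}(φ(v₁, v₂)) = ψ(v₁, v₂) for all v₁, v₂. Moreover, if ψ is nondegenerate then so is φ. -/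
/-- Let `R` be a commutative ring and `S` a finite étale `R`-algebra whose
trace form is a perfect `R`-bilinear pairing. For finitely generated free `S`-modules
`T₁, T₂` and any `S`-balanced `R`-bilinear map `ψ : T₁ × T₂ → R` there is a unique
`S`-bilinear map `φ : T₁ × T₂ → S` with `Tr_{S/R} ∘ φ = ψ`; moreover if `ψ` is
nondegenerate (perfect) then so is `φ`. -/
theorem stmt_4 (R : Type*) [CommRing R] (S : Type*) [CommRing S] [Algebra R S]
    [Module.Free R S] [Module.Finite R S]
    (htr : Function.Bijective (Algebra.traceForm R S))
    (T₁ T₂ : Type*) [AddCommGroup T₁] [AddCommGroup T₂]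
    [Module S T₁] [Module S T₂] [Module R T₁] [Module R T₂]
    [IsScalarTower R S T₁] [IsScalarTower R S T₂]
    [Module.Free S T₁] [Module.Finite S T₁] [Module.Free S T₂] [Module.Finite S T₂]
    (ψ : T₁ →ₗ[R] T₂ →ₗ[R] R)
    (hbal : ∀ (e : S) (v₁ : T₁) (v₂ : T₂), ψ (e • v₁) v₂ = ψ v₁ (e • v₂)) :
    ∃! φ : T₁ →ₗ[S] T₂ →ₗ[S] S,
      (∀ (v₁ : T₁) (v₂ : T₂), Algebra.trace R S (φ v₁ v₂) = ψ v₁ v₂) ∧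
      (Function.Bijective (fun v₁ : T₁ => ψ v₁) →
        Function.Bijective (fun v₁ : T₁ => φ v₁)) := by
  classical
  set Etr : S ≃ₗ[R] (S →ₗ[R] R) :=
    LinearEquiv.ofBijective (Algebra.traceForm R S) htr with hEtr
  -- separation lemma
  have sep : ∀ x y : S, (∀ e : S, Algebra.trace R S (e * x) = Algebra.trace R S (e * y)) →
      x = y := by
    intro x y h
    apply htr.1
    ext e
    simpa [Algebra.traceForm_apply, mul_comm] using h e
  -- auxiliary functional
  let aux : T₁ → T₂ → (S →ₗ[R] R) := fun v₁ v₂ =>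
    { toFun := fun e => ψ (e • v₁) v₂
      map_add' := fun e f => by simp [add_smul]
      map_smul' := fun r e => by simp [smul_assoc] }
  let φ₀ : T₁ → T₂ → S := fun v₁ v₂ => Etr.symm (aux v₁ v₂)
  have key : ∀ (v₁ : T₁) (v₂ : T₂) (e : S),
      Algebra.trace R S (e * φ₀ v₁ v₂) = ψ (e • v₁) v₂ := by
    intro v₁ v₂ e
    have := Etr.apply_symm_apply (aux v₁ v₂)
    have : Etr (φ₀ v₁ v₂) = aux v₁ v₂ := this
    have h2 := congrArg (fun f => f e) this
    have h3 : Algebra.trace R S (e * φ₀ v₁ v₂) = aux v₁ v₂ e := by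
      simpa [hEtr, Algebra.traceForm_apply, mul_comm] using h2
    exact h3
  have key1 : ∀ (v₁ : T₁) (v₂ : T₂), Algebra.trace R S (φ₀ v₁ v₂) = ψ v₁ v₂ := by
    intro v₁ v₂
    simpa using key v₁ v₂ 1
  -- build the S-bilinear map
  let Φ : T₁ →ₗ[S] T₂ →ₗ[S] S :=
    { toFun := fun v₁ =>
        { toFun := fun v₂ => φ₀ v₁ v₂
          map_add' := fun v₂ v₂' => by
            apply sep
            intro e
            simp [key, mul_add]
          map_smul' := fun a v₂ => by
            apply sep
            intro e
            have h1 := key v₁ (a • v₂) e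
            have h2 := key v₁ v₂ (a * e)
            rw [h1, ← hbal, smul_smul, ← h2]
            simp only [RingHom.id_apply, smul_eq_mul]
            congr 1
            ring }
      map_add' := fun v₁ v₁' => by
        ext v₂
        apply sep
        intro e
        simp [key, mul_add, smul_add]
      map_smul' := fun a v₁ => by
        ext v₂
        apply sep
        intro e
        have h2 := key v₁ v₂ (e * a)
        simp only [LinearMap.coe_mk, AddHom.coe_mk, RingHom.id_apply, LinearMap.smul_apply,
          smul_eq_mul]
        rw [key (a • v₁) v₂ e, ← mul_smul, ← h2]
        congr 1
        ring }
  refine ⟨Φ, ⟨key1, ?_⟩, ?_⟩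
  · -- nondegeneracy
    intro hψ
    constructor
    · intro v₁ v₁' h
      apply hψ.1
      ext v₂
      have h' : Φ v₁ = Φ v₁' := h
      have : Φ v₁ v₂ = Φ v₁' v₂ := by rw [h']
      calc ψ v₁ v₂ = Algebra.trace R S (Φ v₁ v₂) := (key1 v₁ v₂).symm
        _ = Algebra.trace R S (Φ v₁' v₂) := by rw [this]
        _ = ψ v₁' v₂ := key1 v₁' v₂
    · intro g
      obtain ⟨v₁, hv₁⟩ := hψ.2 ((Algebra.trace R S).comp (g.restrictScalars R))
      refine ⟨v₁, ?_⟩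
      ext v₂
      apply sep
      intro e
      show Algebra.trace R S (e * φ₀ v₁ v₂) = Algebra.trace R S (e * g v₂)
      have h1 := key v₁ v₂ e
      have h2 : ψ v₁ (e • v₂) = Algebra.trace R S (g (e • v₂)) := by
        have := congrArg (fun f => f (e • v₂)) hv₁
        simpa using this
      rw [h1, hbal, h2, map_smul, smul_eq_mul]
  · -- uniqueness
    intro φ' ⟨hφ', _⟩
    ext v₁ v₂
    apply sep
    intro e
    have h3 : φ' (e • v₁) v₂ = e * φ' v₁ v₂ := by
      rw [map_smul]; rfl
    show Algebra.trace R S (e * φ' v₁ v₂) = Algebra.trace R S (e * φ₀ v₁ v₂)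
    rw [key v₁ v₂ e, ← hφ' (e • v₁) v₂, h3]
end

section
/- With notation as above, suppose T₁ = T₂ = T and ψ : T × T → ℤ_ℓ is a ℤ_ℓ-bilinear pairing whose reduction ψ̄ : T/ℓT × T/ℓT → ℤ/ℓ is nondegenerate, with ψ(ev₁,v₂) = ψ(v₁,ev₂) for e ∈ O_{E,ℓ}. Let φ be the unique O_{E,ℓ}-bilinear lift with Tr∘φ = ψ, and for each prime λ | ℓ let ψ_λ : T_λ × T_λ → O_λ be the λ-component of φ restricted to T_λ = e_λ T. Then for every λ | ℓ, the reduction ψ̄_λ : T_λ/λT_λ × T_λ/λT_λ → k_λ is nondegenerate, ψ_λ is nondegenerate, and ψ_λ ⊗ E_λ is nondegenerate. -/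
open Matrix


/-- With `O_{E,ℓ} = ∏_{λ|ℓ} O_λ` (each `O_λ` local, finite free over `ℤ_ℓ`,
with perfect trace form) and `T` a finitely generated free `O_{E,ℓ}`-module, let
`ψ : T × T → ℤ_ℓ` be balanced with nondegenerate reduction mod `ℓ`, and let `φ` be the
`O_{E,ℓ}`-bilinear lift with `Tr ∘ φ = ψ`. Then for every `λ | ℓ` the component form
`ψ_λ` on `T_λ = e_λT` is nondegenerate, its reduction `ψ̄_λ` mod the maximal ideal is
nondegenerate, and `ψ_λ ⊗ E_λ` is nondegenerate. -/
theorem stmt_5 (l : ℕ) [Fact (Nat.Prime l)]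
    (ι : Type) [Finite ι] [DecidableEq ι] (O : ι → Type)
    [∀ i : ι, CommRing (O i)] [∀ i : ι, IsDomain (O i)] [∀ i : ι, IsLocalRing (O i)]
    [∀ i : ι, Algebra ℤ_[l] (O i)]
    [∀ i : ι, Module.Free ℤ_[l] (O i)] [∀ i : ι, Module.Finite ℤ_[l] (O i)]
    (htr : Function.Bijective (Algebra.traceForm ℤ_[l] (∀ i, O i)))
    (T : Type) [AddCommGroup T] [Module (∀ i, O i) T] [Module ℤ_[l] T]
    [IsScalarTower ℤ_[l] (∀ i, O i) T]
    [Module.Free (∀ i, O i) T] [Module.Finite (∀ i, O i) T]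
    (ψ : T →ₗ[ℤ_[l]] T →ₗ[ℤ_[l]] ℤ_[l])
    (hbal : ∀ (e : ∀ i, O i) (v w : T), ψ (e • v) w = ψ v (e • w))
    (hred : ∀ v : T, (∀ w : T, ∃ c : ℤ_[l], ψ v w = l * c) → ∃ v' : T, v = (l : ℤ_[l]) • v')
    (φ : T →ₗ[∀ i, O i] T →ₗ[∀ i, O i] (∀ i, O i))
    (hφ : ∀ v w : T, Algebra.trace ℤ_[l] (∀ i, O i) (φ v w) = ψ v w)
    (e : ι → ∀ i, O i) (he : ∀ i, e i = Pi.single i 1)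
    (J : ι → Ideal (∀ i, O i))
    (hJ : ∀ i, J i = Ideal.comap (Pi.evalRingHom O i) (IsLocalRing.maximalIdeal (O i))) :
    ∀ i : ι,
      (∀ v : T, (∀ w : T, φ (e i • v) w i ∈ IsLocalRing.maximalIdeal (O i)) →
        e i • v ∈ (J i) • (⊤ : Submodule (∀ i, O i) T)) ∧
      (∀ v : T, (∀ w : T, φ (e i • v) w i = 0) → e i • v = 0) ∧
      (∀ v : T, (∀ w : T, φ v w i = 0) → e i • v = 0) := by
  classical
  intro i
  -- bases
  let b := Module.Free.chooseBasis (∀ j, O j) T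
  let c := Module.Free.chooseBasis ℤ_[l] (∀ j, O j)
  let d := c.smulTower b
  -- the Gram matrix of ψ over ℤ_[l]
  set Q := LinearMap.toMatrix d d.dualBasis ψ with hQdef
  have hQv : ∀ (v : T) (p'), ψ v (d p') = (Q *ᵥ ⇑(d.repr v)) p' := by
    intro v p'
    have h := congrFun (LinearMap.toMatrix_mulVec_repr d d.dualBasis ψ v) p'
    rw [Module.Basis.dualBasis_repr] at h
    rw [← h, hQdef]
  -- det Q is a unit
  have hQdet : IsUnit Q.det := by
    rw [← IsLocalRing.notMem_maximalIdeal]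
    intro hmem
    have h0 : (Q.map (PadicInt.toZMod (p := l))).det = 0 := by
      have hdm := (RingHom.map_det (PadicInt.toZMod (p := l)) Q).symm
      rw [RingHom.mapMatrix_apply] at hdm
      rw [hdm, ← RingHom.mem_ker, PadicInt.ker_toZMod]
      exact hmem
    obtain ⟨y, hy0, hy⟩ := (Matrix.exists_mulVec_eq_zero_iff).2 h0
    set x : _ → ℤ_[l] := fun p => ((y p).val : ℤ_[l]) with hxdef
    have hx : ∀ p, PadicInt.toZMod (x p) = y p := by
      intro p
      simp [hxdef, ZMod.natCast_val, ZMod.cast_id]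
    set v := d.equivFun.symm x with hvdef
    have hrep : ⇑(d.repr v) = x := by
      funext p
      rw [hvdef, ← Module.Basis.equivFun_apply, d.equivFun.apply_symm_apply]
    have hdvd : ∀ w, ∃ cc : ℤ_[l], ψ v w = l * cc := by
      intro w
      have hbasis : ∀ p', (l : ℤ_[l]) ∣ ψ v (d p') := by
        intro p'
        have h1 : PadicInt.toZMod (ψ v (d p')) = 0 := by
          rw [hQv v p', hrep]
          have h2 : PadicInt.toZMod ((Q *ᵥ x) p') = ((Q.map PadicInt.toZMod) *ᵥ y) p' := by
            simp [Matrix.mulVec, dotProduct, map_sum, hx]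
          rw [h2, hy]
          rfl
        rw [← RingHom.mem_ker, PadicInt.ker_toZMod, PadicInt.maximalIdeal_eq_span_p,
          Ideal.mem_span_singleton] at h1
        exact h1
      have hdv : (l : ℤ_[l]) ∣ ψ v w := by
        conv_lhs => skip
        rw [← d.sum_repr w, map_sum]
        exact Finset.dvd_sum fun p' _ => by
          rw [_root_.map_smul, smul_eq_mul]
          exact Dvd.dvd.mul_left (hbasis p') _
      obtain ⟨cc, hcc⟩ := hdv
      exact ⟨cc, hcc⟩
    obtain ⟨v', hv'⟩ := hred v hdvd
    have hyz : ∀ p, y p = 0 := by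
      intro p
      rw [← hx p]
      have hxp : x p = (l : ℤ_[l]) * d.repr v' p := by
        calc x p = d.repr v p := (congrFun hrep p).symm
          _ = (l : ℤ_[l]) * d.repr v' p := by
              rw [hv', _root_.map_smul, Finsupp.smul_apply, smul_eq_mul]
      rw [hxp, _root_.map_mul]
      simp
    exact hy0 (funext hyz)
  -- surjectivity of ψ : T → Dual
  have hψQ : Matrix.toLin d d.dualBasis Q = ψ := by
    rw [hQdef]; exact Matrix.toLin_toMatrix d d.dualBasis ψ
  have hψsurj : Function.Surjective ⇑ψ := by
    intro f
    refine ⟨Matrix.toLin d.dualBasis d Q⁻¹ f, ?_⟩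
    have h1 : (Matrix.toLin d d.dualBasis Q).comp (Matrix.toLin d.dualBasis d Q⁻¹)
        = LinearMap.id := by
      rw [← Matrix.toLin_mul, Matrix.mul_nonsing_inv _ hQdet, Matrix.toLin_one]
    have h2 := LinearMap.congr_fun h1 f
    rw [LinearMap.comp_apply, hψQ] at h2
    exact h2
  -- injectivity of trace pairing on ∀ j, O j
  have htrinj : ∀ z : (∀ j, O j),
      (∀ y : (∀ j, O j), Algebra.trace ℤ_[l] (∀ j, O j) (z * y) = 0) → z = 0 := by
    intro z hz
    refine htr.injective (LinearMap.ext fun y => ?_)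
    simpa [Algebra.traceForm_apply] using hz y
  -- surjectivity of φ : T → Dual_R T
  have hφsurj : Function.Surjective ⇑φ := by
    intro f
    obtain ⟨t, ht⟩ := hψsurj
      ((Algebra.trace ℤ_[l] (∀ j, O j)).comp (f.restrictScalars ℤ_[l]))
    refine ⟨t, ?_⟩
    refine LinearMap.ext fun w => ?_
    have hsub : ∀ y : (∀ j, O j),
        Algebra.trace ℤ_[l] (∀ j, O j) ((φ t w - f w) * y) = 0 := by
      intro y
      have h1 : Algebra.trace ℤ_[l] (∀ j, O j) (φ t (y • w)) = ψ t (y • w) := hφ t (y • w)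
      have h2 : ψ t (y • w) = Algebra.trace ℤ_[l] (∀ j, O j) (f (y • w)) := by
        rw [ht]; rfl
      have e1 : (φ t w - f w) * y = φ t (y • w) - f (y • w) := by
        rw [_root_.map_smul, _root_.map_smul, smul_eq_mul, smul_eq_mul, sub_mul]
        ring
      rw [e1, map_sub, h1, h2, sub_self]
    have := htrinj _ hsub
    exact sub_eq_zero.mp this
  -- bijectivity of φ and unit determinant of its Gram matrix
  have hφbij : Function.Bijective ⇑φ := by
    refine ⟨?_, hφsurj⟩
    have hcs : Function.Surjective
        ⇑((b.dualBasis.equiv b (Equiv.refl _)).toLinearMap ∘ₗ φ) :=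
      (b.dualBasis.equiv b (Equiv.refl _)).surjective.comp hφsurj
    have hci := OrzechProperty.injective_of_surjective_endomorphism _ hcs
    intro a₁ a₂ h
    exact hci (by simp [LinearMap.comp_apply, h])
  set M := LinearMap.toMatrix b b.dualBasis φ with hMdef
  have hMv : ∀ (v : T) (a), φ v (b a) = (M *ᵥ ⇑(b.repr v)) a := by
    intro v a
    have h := congrFun (LinearMap.toMatrix_mulVec_repr b b.dualBasis φ v) a
    rw [Module.Basis.dualBasis_repr] at h
    rw [← h, hMdef]
  have hMdet : IsUnit M.det := by
    set eφ := LinearEquiv.ofBijective φ hφbij with heφ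
    have h1 : φ ∘ₗ eφ.symm.toLinearMap = LinearMap.id := by
      ext f
      have : φ (eφ.symm f) = eφ (eφ.symm f) := rfl
      simp [LinearMap.comp_apply, this]
    have h2 : M * LinearMap.toMatrix b.dualBasis b eφ.symm.toLinearMap = 1 := by
      rw [hMdef, ← LinearMap.toMatrix_comp b.dualBasis b b.dualBasis φ eφ.symm.toLinearMap,
        h1, LinearMap.toMatrix_id]
    exact IsUnit.of_mul_eq_one _ (by rw [← Matrix.det_mul, h2, Matrix.det_one])
  -- component i computations
  have hco : ∀ v w, φ (e i • v) w i = φ v w i := by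
    intro v w
    rw [_root_.map_smul, LinearMap.smul_apply, smul_eq_mul, Pi.mul_apply, he, Pi.single_eq_same,
      one_mul]
  -- part (3)
  have key3 : ∀ v : T, (∀ w : T, φ v w i = 0) → e i • v = 0 := by
    intro v hv
    have hMl : IsUnit ((M.map (Pi.evalRingHom O i)).det) := by
      have hdm := RingHom.map_det (Pi.evalRingHom O i) M
      rw [RingHom.mapMatrix_apply] at hdm
      rw [← hdm]; exact hMdet.map _
    have hsolve : (M.map (Pi.evalRingHom O i)) *ᵥ (fun a => b.repr v a i) = 0 := by
      funext a
      have h1 : ((M.map (Pi.evalRingHom O i)) *ᵥ fun a' => b.repr v a' i) a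
          = ((M *ᵥ ⇑(b.repr v)) a) i := by
        simp only [Matrix.mulVec, dotProduct, Matrix.map_apply, Finset.sum_apply,
          Pi.mul_apply, Pi.evalRingHom_apply]
      rw [h1, ← hMv v a, hv (b a)]
      rfl
    have hx : ∀ a, b.repr v a i = 0 := by
      intro a
      have h2 : (fun a' => b.repr v a' i) =
          (M.map (Pi.evalRingHom O i))⁻¹ *ᵥ
            ((M.map (Pi.evalRingHom O i)) *ᵥ fun a' => b.repr v a' i) := by
        rw [Matrix.mulVec_mulVec, Matrix.nonsing_inv_mul _ hMl, Matrix.one_mulVec]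
      rw [hsolve, Matrix.mulVec_zero] at h2
      exact congrFun h2 a
    have hz : b.repr (e i • v) = 0 := by
      rw [_root_.map_smul]
      refine Finsupp.ext fun a => ?_
      rw [Finsupp.smul_apply, smul_eq_mul, Finsupp.coe_zero, Pi.zero_apply]
      funext j
      rw [Pi.zero_apply]
      rcases eq_or_ne j i with rfl | hne
      · simp [Pi.mul_apply, he, Pi.single_eq_same, hx a]
      · simp [Pi.mul_apply, he, Pi.single_eq_of_ne hne]
    exact (LinearEquiv.map_eq_zero_iff _).mp hz
  refine ⟨?_, ?_, key3⟩
  · -- part (1)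
    intro v hv
    have hv' : ∀ w, φ v w i ∈ IsLocalRing.maximalIdeal (O i) := fun w => by
      rw [← hco v w]; exact hv w
    set π := (IsLocalRing.residue (O i)).comp (Pi.evalRingHom O i) with hπ
    have hMl : IsUnit ((M.map π).det) := by
      have hdm := RingHom.map_det π M
      rw [RingHom.mapMatrix_apply] at hdm
      rw [← hdm]; exact hMdet.map _
    have hsolve : (M.map π) *ᵥ (fun a => π (b.repr v a)) = 0 := by
      funext a
      have h1 : ((M.map π) *ᵥ fun a' => π (b.repr v a')) a
          = π ((M *ᵥ ⇑(b.repr v)) a) := by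
        simp only [Matrix.mulVec, dotProduct, Matrix.map_apply]
        rw [_root_.map_sum]
        exact Finset.sum_congr rfl fun a' _ => (_root_.map_mul π _ _).symm
      rw [h1, ← hMv v a]
      show IsLocalRing.residue (O i) (φ v (b a) i) = 0
      exact Ideal.Quotient.eq_zero_iff_mem.mpr (hv' (b a))
    have hx : ∀ a, π (b.repr v a) = 0 := by
      intro a
      have h2 : (fun a' => π (b.repr v a')) =
          (M.map π)⁻¹ *ᵥ ((M.map π) *ᵥ fun a' => π (b.repr v a')) := by
        rw [Matrix.mulVec_mulVec, Matrix.nonsing_inv_mul _ hMl, Matrix.one_mulVec]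
      rw [hsolve, Matrix.mulVec_zero] at h2
      exact congrFun h2 a
    have hcoef : ∀ a, e i * b.repr v a ∈ J i := by
      intro a
      rw [hJ]
      show (e i * b.repr v a) i ∈ IsLocalRing.maximalIdeal (O i)
      have h3 : (e i * b.repr v a) i = b.repr v a i := by
        rw [Pi.mul_apply, he, Pi.single_eq_same, one_mul]
      rw [h3]
      exact Ideal.Quotient.eq_zero_iff_mem.mp (hx a)
    have hrepr : e i • v = ∑ a, (e i * b.repr v a) • b a := by
      conv_lhs => rw [← b.sum_repr v]
      rw [Finset.smul_sum]
      exact Finset.sum_congr rfl fun a _ => smul_smul _ _ _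
    rw [hrepr]
    exact Submodule.sum_mem _ fun a _ =>
      Submodule.smul_mem_smul (hcoef a) Submodule.mem_top
  · -- part (2)
    intro v hv
    exact key3 v fun w => by rw [← hco v w]; exact hv w
end

section
/- Let K be a field, R a unital K-algebra, and M an R-module which is semisimple. Let D = End_R(M) and let L be a subfield of the center of D such that L/K is a finite separable extension. Then M, viewed as a module over R ⊗_K L via the natural action, is semisimple. -/
open TensorProduct Polynomial

/-- Universe-heterogeneous version of `Algebra.FormallyUnramified.of_isSeparable`
(the Mathlib version requires `K` and `L` to live in the same universe; its proof
does not). -/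
theorem aux_formallyUnramified_of_isSeparable (K : Type*) (L : Type*) [Field K] [Field L]
    [Algebra K L] [Algebra.IsSeparable K L] : Algebra.FormallyUnramified K L := by
  rw [Algebra.FormallyUnramified.iff_comp_injective]
  intros B _ _ I hI f₁ f₂ e
  ext x
  have : f₁ x - f₂ x ∈ I := by
    simpa [Ideal.Quotient.mk_eq_mk_iff_sub_mem] using AlgHom.congr_fun e x
  have := Polynomial.eval_add_of_sq_eq_zero ((minpoly K x).map (algebraMap K B)) (f₂ x)
    (f₁ x - f₂ x) (show (f₁ x - f₂ x) ^ 2 ∈ ⊥ from hI ▸ Ideal.pow_mem_pow this 2)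
  simp only [add_sub_cancel, eval_map_algebraMap, aeval_algHom_apply, minpoly.aeval, map_zero,
    derivative_map, zero_add] at this
  rwa [eq_comm, ((isUnit_iff_ne_zero.mpr
    ((Algebra.IsSeparable.isSeparable K x).aeval_derivative_ne_zero
      (minpoly.aeval K x))).map f₂).mul_right_eq_zero, sub_eq_zero] at this

/-- Let `K` be a field, `R` a unital `K`-algebra and `M` a semisimple
`R`-module. Let `L` be a subfield of the center of `D = End_R(M)` (given here by a central
embedding `ι : L →ₐ[K] End_R(M)`) with `L/K` finite separable. Then `M` is semisimple as an
`R ⊗_K L`-module; equivalently, every `R`-submodule stable under `L` admits an `L`-stable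
complement. -/
theorem stmt_7 (K : Type*) [Field K] (R : Type*) [Ring R] [Algebra K R]
    (M : Type*) [AddCommGroup M] [Module R M] [Module K M] [IsScalarTower K R M]
    [SMulCommClass K R M]
    [IsSemisimpleModule R M]
    (L : Type*) [Field L] [Algebra K L] [FiniteDimensional K L] [Algebra.IsSeparable K L]
    (ι : L →ₐ[K] Module.End R M)
    (hcentral : ∀ (x : L) (f : Module.End R M), Commute (ι x) f) :
    ∀ N : Submodule R M, (∀ (x : L), ∀ m ∈ N, ι x m ∈ N) →
      ∃ N' : Submodule R M, (∀ (x : L), ∀ m ∈ N', ι x m ∈ N') ∧ IsCompl N N' := by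
  haveI : Algebra.FormallyUnramified K L := aux_formallyUnramified_of_isSeparable K L
  intro N hN
  -- choose an `R`-linear complement and the associated projection onto `N`
  obtain ⟨N₀, hc⟩ := exists_isCompl N
  set π : Module.End R M := N.subtype ∘ₗ (N.linearProjOfIsCompl N₀ hc) with hπ
  have hπ_mem : ∀ m : M, π m ∈ N := fun m => (N.linearProjOfIsCompl N₀ hc m).2
  have hπ_fix : ∀ m ∈ N, π m = m := by
    intro m hm
    exact congrArg (Submodule.subtype N)
      (Submodule.linearProjOfIsCompl_apply_left hc ⟨m, hm⟩)
  -- the bilinear map `(x, y) ↦ ι x * π * ι y`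
  set B : L →ₗ[K] L →ₗ[K] Module.End R M :=
    LinearMap.mk₂ K (fun x y => ι x * π * ι y)
      (fun x x' y => by simp [map_add, add_mul])
      (fun a x y => by
        simp only [← AlgHom.toLinearMap_apply, map_smul]
        simp [smul_mul_assoc])
      (fun x y y' => by simp [map_add, mul_add])
      (fun a x y => by
        simp only [← AlgHom.toLinearMap_apply, map_smul]
        simp [mul_smul_comm]) with hB
  set φ : L ⊗[K] L →ₗ[K] Module.End R M := TensorProduct.lift B with hφ
  have hφ_tmul : ∀ x y : L, φ (x ⊗ₜ[K] y) = ι x * π * ι y := fun x y => rfl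
  -- image of `φ t` lands in `N`
  have h1 : ∀ t : L ⊗[K] L, ∀ m : M, φ t m ∈ N := by
    intro t
    induction t using TensorProduct.induction_on with
    | zero => intro m; simp
    | tmul x y =>
        intro m
        rw [hφ_tmul]
        exact hN x _ (hπ_mem (ι y m))
    | add t t' ht ht' =>
        intro m
        rw [map_add, LinearMap.add_apply]
        exact N.add_mem (ht m) (ht' m)
  -- on `N`, `φ t` acts as `ι (lmul' t)`
  have h2 : ∀ t : L ⊗[K] L, ∀ m ∈ N, φ t m = ι (Algebra.TensorProduct.lmul' K t) m := by
    intro t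
    induction t using TensorProduct.induction_on with
    | zero => intro m hm; simp
    | tmul x y =>
        intro m hm
        rw [hφ_tmul, Algebra.TensorProduct.lmul'_apply_tmul, map_mul]
        have h : π (ι y m) = ι y m := hπ_fix _ (hN y m hm)
        simp [Module.End.mul_apply, h]
    | add t t' ht ht' =>
        intro m hm
        simp only [map_add, LinearMap.add_apply, ht m hm, ht' m hm]
  -- multiplication identities
  have h3 : ∀ (x : L) (t : L ⊗[K] L), ι x * φ t = φ ((x ⊗ₜ[K] (1 : L)) * t) := by
    intro x t
    induction t using TensorProduct.induction_on with
    | zero => simp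
    | tmul a b =>
        rw [Algebra.TensorProduct.tmul_mul_tmul, one_mul, hφ_tmul, hφ_tmul, map_mul]
        simp only [mul_assoc]
    | add t t' ht ht' => rw [map_add, mul_add, ht, ht', ← map_add, mul_add]
  have h4 : ∀ (x : L) (t : L ⊗[K] L), φ t * ι x = φ (t * ((1 : L) ⊗ₜ[K] x)) := by
    intro x t
    induction t using TensorProduct.induction_on with
    | zero => simp
    | tmul a b =>
        rw [Algebra.TensorProduct.tmul_mul_tmul, mul_one, hφ_tmul, hφ_tmul, map_mul]
        simp only [mul_assoc]
    | add t t' ht ht' => rw [map_add, add_mul, ht, ht', ← map_add, add_mul]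
  set p : Module.End R M := φ (Algebra.FormallyUnramified.elem K L) with hp
  have hcomm : ∀ x : L, ι x * p = p * ι x := by
    intro x
    rw [hp, h3, h4]
    congr 1
    rw [mul_comm (Algebra.FormallyUnramified.elem K L) ((1 : L) ⊗ₜ[K] x)]
    exact (Algebra.FormallyUnramified.one_tmul_mul_elem x).symm
  have hp_mem : ∀ m : M, p m ∈ N := h1 (Algebra.FormallyUnramified.elem K L)
  have hp_fix : ∀ m ∈ N, p m = m := by
    intro m hm
    rw [hp, h2 (Algebra.FormallyUnramified.elem K L) m hm, Algebra.FormallyUnramified.lmul_elem, map_one]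
    rfl
  refine ⟨LinearMap.ker p, ?_, ?_⟩
  · intro x m hm
    have hx : p (ι x m) = ι x (p m) := by
      have := congrArg (fun f : Module.End R M => f m) (hcomm x)
      simpa [Module.End.mul_apply] using this.symm
    rw [LinearMap.mem_ker] at hm ⊢
    rw [hx, hm, map_zero]
  · have hker : LinearMap.ker (p.codRestrict N hp_mem) = LinearMap.ker p := by
      ext m
      simp [LinearMap.mem_ker, LinearMap.codRestrict, Subtype.ext_iff]
    have hcompl := LinearMap.isCompl_of_proj
      (f := p.codRestrict N hp_mem) (fun x : N => by
        ext
        simp [LinearMap.codRestrict, hp_fix x.1 x.2])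
    rwa [hker] at hcompl
end

section
/- Let V be a 2g-dimensional ℚ-vector space with a nondegenerate alternating form ψ : V × V → ℚ, let E be a totally real number field of degree e acting on V by self-adjoint endomorphisms (ψ(αv,w) = ψ(v,αw) for α ∈ E), so that by trace descent there is a unique E-bilinear nondegenerate alternating form φ : V × V → E with Tr_{E/ℚ} ∘ φ = ψ. Then the centralizer of E in Sp(V, ψ) equals the Weil restriction Res_{E/ℚ} Sp(V, φ), i.e. C_E(Sp_{(V,ψ)}) = R_{E/ℚ}(Sp_{(V,φ)}) as algebraic groups over ℚ. -/
open scoped TensorProduct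

/-- Let `V` be a `2g`-dimensional `ℚ`-vector space with a nondegenerate
alternating form `ψ`, on which a totally real number field `E` acts by `ψ`-self-adjoint
endomorphisms, and let `φ : V × V → E` be the unique `E`-bilinear alternating nondegenerate
form with `Tr_{E/ℚ} ∘ φ = ψ`. Then `C_E(Sp_{(V,ψ)}) = Res_{E/ℚ} Sp_{(V,φ)}`: for every
commutative `ℚ`-algebra `B`, a `B`-point `g` of `GL(V)` commuting with `E` preserves the
base change of `ψ` if and only if it preserves the base change of `φ`. -/
theorem stmt_13 (E : Type*) [Field E] [NumberField E] [Algebra ℚ E]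
    (htotreal : ∀ (f : E →+* ℂ) (x : E), (f x).im = 0)
    (V : Type*) [AddCommGroup V] [Module E V] [Module ℚ V] [IsScalarTower ℚ E V]
    [FiniteDimensional E V]
    (gdim : ℕ) (hdim : Module.finrank ℚ V = 2 * gdim)
    (ψ : V →ₗ[ℚ] V →ₗ[ℚ] ℚ)
    (hψalt : ∀ v : V, ψ v v = 0)
    (hψnd : ∀ v : V, (∀ w : V, ψ v w = 0) → v = 0)
    (hbal : ∀ (a : E) (v w : V), ψ (a • v) w = ψ v (a • w))
    (φ : V →ₗ[E] V →ₗ[E] E)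
    (hφalt : ∀ v : V, φ v v = 0)
    (hφnd : ∀ v : V, (∀ w : V, φ v w = 0) → v = 0)
    (htrφ : ∀ v w : V, Algebra.trace ℚ E (φ v w) = ψ v w)
    (aV : E → (V →ₗ[ℚ] V)) (haV : ∀ (a : E) (v : V), aV a v = a • v) :
    ∀ (B : Type*) [CommRing B] [Algebra ℚ B],
    ∀ g : (B ⊗[ℚ] V) ≃ₗ[B] (B ⊗[ℚ] V),
      (∀ (a : E) (x : B ⊗[ℚ] V),
        g (LinearMap.baseChange B (aV a) x) = LinearMap.baseChange B (aV a) (g x)) →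
    ∀ (ψB : (B ⊗[ℚ] V) →ₗ[B] (B ⊗[ℚ] V) →ₗ[B] B)
      (φB : (B ⊗[ℚ] V) →ₗ[B] (B ⊗[ℚ] V) →ₗ[B] (B ⊗[ℚ] E)),
      (∀ (b c : B) (v w : V),
        ψB (b ⊗ₜ[ℚ] v) (c ⊗ₜ[ℚ] w) = b * c * algebraMap ℚ B (ψ v w)) →
      (∀ (b c : B) (v w : V),
        φB (b ⊗ₜ[ℚ] v) (c ⊗ₜ[ℚ] w) = (b * c) ⊗ₜ[ℚ] (φ v w)) →
      ((∀ x y : B ⊗[ℚ] V, ψB (g x) (g y) = ψB x y) ↔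
       (∀ x y : B ⊗[ℚ] V, φB (g x) (g y) = φB x y)) := by
  intro B _ _ g hg ψB φB hψB hφB
  -- the family of B-linear "twisted trace" functionals on B ⊗ E
  let T : E → (B ⊗[ℚ] E →ₗ[B] B) := fun a =>
    LinearMap.liftBaseChange B
      ((Algebra.linearMap ℚ B) ∘ₗ (Algebra.trace ℚ E) ∘ₗ (LinearMap.mulLeft ℚ a))
  have hT : ∀ (a : E) (b : B) (x : E),
      T a (b ⊗ₜ[ℚ] x) = b * algebraMap ℚ B (Algebra.trace ℚ E (a * x)) := by
    intro a b x
    simp [T, LinearMap.liftBaseChange_tmul, Algebra.smul_def]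
  -- key identity: T a (φB x y) = ψB ((aV a) x) y
  have key : ∀ (a : E) (x y : B ⊗[ℚ] V),
      T a (φB x y) = ψB ((aV a).baseChange B x) y := by
    intro a x y
    induction x using TensorProduct.induction_on with
    | zero => simp
    | add x₁ x₂ h₁ h₂ => simp only [map_add, LinearMap.add_apply, h₁, h₂]
    | tmul b v =>
      induction y using TensorProduct.induction_on with
      | zero => simp
      | add y₁ y₂ h₁ h₂ => simp only [map_add, h₁, h₂]
      | tmul c w =>
        rw [hφB, hT, LinearMap.baseChange_tmul, haV, hψB, ← htrφ, map_smul]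
        simp [smul_eq_mul, mul_assoc]
  -- joint injectivity of the family T
  have inj : ∀ z : B ⊗[ℚ] E, (∀ a : E, T a z = 0) → z = 0 := by
    intro z hz
    classical
    have := (inferInstance : FiniteDimensional ℚ E)
    let e := Module.finBasis ℚ E
    let d := (Algebra.traceForm ℚ E).dualBasis (traceForm_nondegenerate ℚ E) e
    let bE := e.baseChange B
    apply bE.repr.injective
    ext i
    have hsum := bE.sum_repr z
    have : T (d i) z = bE.repr z i := by
      conv_lhs => rw [← hsum]
      rw [map_sum]
      rw [Finset.sum_eq_single i]
      · rw [map_smul, Module.Basis.baseChange_apply, hT, one_mul]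
        have : Algebra.trace ℚ E (d i * e i) =
            (Algebra.traceForm ℚ E) (d i) (e i) := by simp [Algebra.traceForm_apply]
        rw [this, LinearMap.BilinForm.apply_dualBasis_left]
        simp [smul_eq_mul]
      · intro j _ hj
        rw [map_smul, Module.Basis.baseChange_apply, hT, one_mul]
        have : Algebra.trace ℚ E (d i * e j) =
            (Algebra.traceForm ℚ E) (d i) (e j) := by simp [Algebra.traceForm_apply]
        rw [this, LinearMap.BilinForm.apply_dualBasis_left]
        simp [hj]
      · intro h; exact absurd (Finset.mem_univ i) h
    rw [← this, hz]
    simp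
  -- aV 1 base changes to identity
  have hone : ∀ x : B ⊗[ℚ] V, (aV (1 : E)).baseChange B x = x := by
    have : aV (1 : E) = LinearMap.id := by ext v; simp [haV]
    intro x; rw [this, LinearMap.baseChange_id]; rfl
  constructor
  · intro hψ x y
    have h0 : φB (g x) (g y) - φB x y = 0 := by
      apply inj
      intro a
      rw [map_sub, key, key, ← hg, hψ, sub_self]
    exact sub_eq_zero.mp h0
  · intro hφ x y
    have h1 : ∀ u w : B ⊗[ℚ] V, ψB u w = T 1 (φB u w) := by
      intro u w; rw [key, hone]
    rw [h1, h1, hφ]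
end

section
/- Let E/K be a finite separable extension of fields of characteristic zero, and let G be a linear algebraic group over E. Then the Weil restriction of the derived group equals the derived group of the Weil restriction: Res_{E/K}(G') = (Res_{E/K} G)'. -/
open scoped TensorProduct

/-!
Over `Ω` the algebra `Ω ⊗[K] E` splits as `∏_σ Ω`, hence `GL_m(Ω ⊗[K] E) ≅ ∏_σ GL_m(Ω)`. An
element of a product ring vanishes iff all its coordinates do, so under this isomorphism the
points of `G` become `∏_σ G^σ(Ω)`. Commutator subgroups are transported by group isomorphisms and
commute with finite products, which gives the description of `⁅GΩE, GΩE⁆`.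
-/

theorem Subgroup.commutator_comap_pi {ι G : Type*} [Finite ι] [Group G] {H : ι → Type*}
    [∀ i, Group (H i)] (Φ : G ≃* ∀ i, H i) (B : ∀ i, Subgroup (H i)) :
    ⁅(Subgroup.pi Set.univ B).comap Φ.toMonoidHom, (Subgroup.pi Set.univ B).comap Φ.toMonoidHom⁆
      = (Subgroup.pi Set.univ fun i => ⁅B i, B i⁆).comap Φ.toMonoidHom := by
  simp only [Subgroup.comap_equiv_eq_map_symm', ← Subgroup.map_commutator,
    Subgroup.commutator_pi_pi_of_finite]

namespace Matrix.GeneralLinearGroup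

variable {n ι R : Type*} [Fintype n] [DecidableEq n] [CommRing R] {S : ι → Type*}
  [∀ i, CommRing (S i)]

def equivPiOfRingEquiv (e : R ≃+* ∀ i, S i) : GL n R ≃* ∀ i, GL n (S i) :=
  (Units.mapEquiv (e.mapMatrix.trans Matrix.piRingEquiv).toMulEquiv).trans MulEquiv.piUnits

theorem equivPiOfRingEquiv_apply (e : R ≃+* ∀ i, S i) (x : GL n R) (i : ι) :
    equivPiOfRingEquiv e x i
      = Units.map ((Pi.evalRingHom S i).comp e.toRingHom).mapMatrix.toMonoidHom x := by
  ext; rfl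

end Matrix.GeneralLinearGroup

theorem MvPolynomial.eval₂_eq_zero_iff_forall_of_ringEquiv_pi {σ ι A R : Type*} {S : ι → Type*}
    [CommSemiring A] [CommSemiring R] [∀ i, CommSemiring (S i)] (e : R ≃+* ∀ i, S i)
    (φ : A →+* R) (v : σ → R) (f : MvPolynomial σ A) :
    eval₂ φ v f = 0 ↔
      ∀ i, eval₂ ((Pi.evalRingHom S i).comp (e.toRingHom.comp φ)) (fun s => e (v s) i) f = 0 := by
  rw [← map_eq_zero_iff e e.injective]
  refine _root_.funext_iff.trans (forall_congr' fun i => ?_)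
  exact iff_of_eq <|
    congrArg (· = 0) (eval₂_comp_left ((Pi.evalRingHom S i).comp e.toRingHom) φ v f)

theorem stmt_18_general (K E : Type) [Field K] [Field E] [Algebra K E]
    (Ω : Type) [Field Ω] [Algebra K Ω]
    (nE : ℕ) (σ : Fin nE ≃ (E →ₐ[K] Ω))
    (e : (Ω ⊗[K] E) ≃ₐ[K] (Fin nE → Ω))
    (he : ∀ (ω : Ω) (x : E), e (ω ⊗ₜ[K] x) = fun i => ω * σ i x)
    (m : ℕ) (I : Ideal (MvPolynomial (Fin m × Fin m) E))
    (GΩE : Subgroup (GL (Fin m) (Ω ⊗[K] E)))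
    (hGΩE : ∀ x : GL (Fin m) (Ω ⊗[K] E), x ∈ GΩE ↔ ∀ f ∈ I,
      MvPolynomial.eval₂
        (Algebra.TensorProduct.includeRight : E →ₐ[K] Ω ⊗[K] E).toRingHom
        (fun ij => (x : Matrix (Fin m) (Fin m) (Ω ⊗[K] E)) ij.1 ij.2) f = 0)
    (Gσ : Fin nE → Subgroup (GL (Fin m) Ω))
    (hGσ : ∀ i, ∀ x : GL (Fin m) Ω, x ∈ Gσ i ↔ ∀ f ∈ I,
      MvPolynomial.eval₂ (σ i).toRingHom
        (fun ij => (x : Matrix (Fin m) (Fin m) Ω) ij.1 ij.2) f = 0) :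
    ∀ x : GL (Fin m) (Ω ⊗[K] E),
      x ∈ ⁅GΩE, GΩE⁆ ↔
      (x ∈ GΩE ∧ ∀ i : Fin nE,
        Units.map (((Pi.evalRingHom (fun _ : Fin nE => Ω) i).comp
            e.toAlgHom.toRingHom).mapMatrix.toMonoidHom) x ∈ ⁅Gσ i, Gσ i⁆) := by
  let Φ := Matrix.GeneralLinearGroup.equivPiOfRingEquiv (n := Fin m) e.toRingEquiv
  have hσ : ∀ i, (Pi.evalRingHom _ i).comp (e.toRingEquiv.toRingHom.comp
      (Algebra.TensorProduct.includeRight : E →ₐ[K] Ω ⊗[K] E).toRingHom) = (σ i).toRingHom := by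
    intro i
    ext y
    simp [he]
  have hG : GΩE = (Subgroup.pi Set.univ Gσ).comap Φ.toMonoidHom := by
    ext x
    simp only [hGΩE, MvPolynomial.eval₂_eq_zero_iff_forall_of_ringEquiv_pi e.toRingEquiv, hσ,
      Subgroup.mem_comap, Subgroup.mem_pi, Set.mem_univ, true_implies, hGσ]
    exact ⟨fun h i f hf => h f hf i, fun h f hf i => h i f hf⟩
  intro x
  have hx : x ∈ ⁅GΩE, GΩE⁆ ↔ ∀ i, Φ x i ∈ ⁅Gσ i, Gσ i⁆ := by
    rw [hG, Subgroup.commutator_comap_pi, Subgroup.mem_comap, Subgroup.mem_pi]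
    simp only [Set.mem_univ, true_implies, MulEquiv.coe_toMonoidHom]
  simp only [Φ, Matrix.GeneralLinearGroup.equivPiOfRingEquiv_apply] at hx
  exact ⟨fun h => ⟨Subgroup.commutator_le_self _ h, hx.mp h⟩, fun h => hx.mpr h.2⟩

/-- For a finite (separable) extension `E/K` of fields of characteristic zero
and a linear algebraic group `G` over `E` (realized as a closed subgroup of `GL_m` cut out
by an ideal `I` of polynomial equations), the Weil restriction of the derived group equals
the derived group of the Weil restriction: `Res_{E/K}(G') = (Res_{E/K}G)'`. On points over
an algebraically closed field `Ω ⊇ K`, using `(Res_{E/K}G)(Ω) = G(Ω ⊗_K E)` and the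
decomposition `Ω ⊗_K E ≅ ∏_σ Ω`, this says that the (abstract = algebraic, by char 0)
derived subgroup of `G(Ω ⊗_K E)` corresponds to `∏_σ [G^σ(Ω), G^σ(Ω)] = Res(G')(Ω)`. -/
theorem stmt_18 (K E : Type) [Field K] [Field E] [CharZero K] [Algebra K E]
    [FiniteDimensional K E]
    (Ω : Type) [Field Ω] [IsAlgClosed Ω] [Algebra K Ω]
    (nE : ℕ) (hnE : nE = Module.finrank K E) (σ : Fin nE ≃ (E →ₐ[K] Ω))
    (e : (Ω ⊗[K] E) ≃ₐ[K] (Fin nE → Ω))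
    (he : ∀ (ω : Ω) (x : E), e (ω ⊗ₜ[K] x) = fun i => ω * σ i x)
    (m : ℕ) (I : Ideal (MvPolynomial (Fin m × Fin m) E))
    (GΩE : Subgroup (GL (Fin m) (Ω ⊗[K] E)))
    (hGΩE : ∀ x : GL (Fin m) (Ω ⊗[K] E), x ∈ GΩE ↔ ∀ f ∈ I,
      MvPolynomial.eval₂
        (Algebra.TensorProduct.includeRight : E →ₐ[K] Ω ⊗[K] E).toRingHom
        (fun ij => (x : Matrix (Fin m) (Fin m) (Ω ⊗[K] E)) ij.1 ij.2) f = 0)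
    (Gσ : Fin nE → Subgroup (GL (Fin m) Ω))
    (hGσ : ∀ i, ∀ x : GL (Fin m) Ω, x ∈ Gσ i ↔ ∀ f ∈ I,
      MvPolynomial.eval₂ (σ i).toRingHom
        (fun ij => (x : Matrix (Fin m) (Fin m) Ω) ij.1 ij.2) f = 0) :
    ∀ x : GL (Fin m) (Ω ⊗[K] E),
      x ∈ ⁅GΩE, GΩE⁆ ↔
      (x ∈ GΩE ∧ ∀ i : Fin nE,
        Units.map (((Pi.evalRingHom (fun _ : Fin nE => Ω) i).comp
            e.toAlgHom.toRingHom).mapMatrix.toMonoidHom) x ∈ ⁅Gσ i, Gσ i⁆) :=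
  stmt_18_general K E Ω nE σ e he m I GΩE hGΩE Gσ hGσ
end
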